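/- arXiv:1902.08497 — 3 statements merged into one kernel-verified Lean document; each statement's English description precedes it below -/
import Mathlib

section
/- Let f : (0,∞) → ℝ be strictly decreasing, K(x,y) := f(|x−y|), and A ⊆ ℝ^p compact. If ω*_N = {x₁,…,x_N} is an N-point multiset with P_K(A, ω*_N) = 𝒫*_K(A, N) < +∞ (i.e., ω*_N attains the unconstrained polarization maximum), then every xᵢ lies in the convex hull of A. In particular, if A is convex then ω*_N ⊆ A and 𝒫_K(A, N) = 𝒫*_K(A, N). -/
open Set
open scoped RealInnerProductSpace

private lemma ereal_coe_sum {α : Type*} (s : Finset α) (g : α → ℝ) :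
    ((∑ i ∈ s, g i : ℝ) : EReal) = ∑ i ∈ s, ((g i : ℝ) : EReal) :=
  map_sum (⟨⟨(fun x : ℝ => (x : EReal)), EReal.coe_zero⟩, EReal.coe_add⟩ : ℝ →+ EReal) g s

private lemma exists_gap (f : ℝ → ℝ) (hf : StrictAntiOn f (Set.Ioi 0)) {δ D ε : ℝ}
    (hδ : 0 < δ) (hε : 0 < ε) :
    ∃ η : ℝ, 0 < η ∧ ∀ s : ℝ, δ ≤ s → s ≤ D → f (s + ε) + η ≤ f s := by
  set K := Nat.floor ((D - δ) / (ε / 2)) + 1 with hK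
  set c : ℕ → ℝ := fun k => f (δ + (k + 1) * (ε / 2)) - f (δ + (k + 2) * (ε / 2)) with hc
  have hcpos : ∀ k : ℕ, 0 < c k := by
    intro k
    have h1 : (δ + (k + 1) * (ε / 2)) ∈ Set.Ioi (0:ℝ) := by
      simp only [Set.mem_Ioi]; positivity
    have h2 : (δ + (k + 2) * (ε / 2)) ∈ Set.Ioi (0:ℝ) := by
      simp only [Set.mem_Ioi]; positivity
    have h3 : δ + (k + 1) * (ε / 2) < δ + (k + 2) * (ε / 2) := by nlinarith
    exact sub_pos.mpr (hf h1 h2 h3)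
  have hne : (Finset.range K).Nonempty := ⟨0, by simp [hK]⟩
  refine ⟨(Finset.range K).inf' hne c, ?_, ?_⟩
  · rw [Finset.lt_inf'_iff]
    exact fun k _ => hcpos k
  · intro s hs1 hs2
    set k := Nat.floor ((s - δ) / (ε / 2)) with hk
    have hsδ : 0 ≤ (s - δ) / (ε / 2) := by
      apply div_nonneg (by linarith) (by linarith)
    have hk1 : (k : ℝ) * (ε / 2) ≤ s - δ := by
      have h := Nat.floor_le hsδ
      calc (k : ℝ) * (ε / 2) ≤ ((s - δ) / (ε / 2)) * (ε / 2) := by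
            apply mul_le_mul_of_nonneg_right h (by linarith)
        _ = s - δ := by field_simp
    have hk2 : s - δ < ((k : ℝ) + 1) * (ε / 2) := by
      have h := Nat.lt_floor_add_one ((s - δ) / (ε / 2))
      calc s - δ = ((s - δ) / (ε / 2)) * (ε / 2) := by field_simp
        _ < ((k : ℝ) + 1) * (ε / 2) := by
            apply mul_lt_mul_of_pos_right (by exact_mod_cast h) (by linarith)
    have hkK : k ∈ Finset.range K := by
      rw [Finset.mem_range, hK, Nat.lt_succ_iff]
      exact Nat.floor_le_floor (by gcongr <;> linarith)
    have hmem1 : s ∈ Set.Ioi (0:ℝ) := by simp only [Set.mem_Ioi]; linarith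
    have hmem2 : (δ + ((k:ℝ) + 1) * (ε / 2)) ∈ Set.Ioi (0:ℝ) := by
      simp only [Set.mem_Ioi]; positivity
    have hmem3 : (δ + ((k:ℝ) + 2) * (ε / 2)) ∈ Set.Ioi (0:ℝ) := by
      simp only [Set.mem_Ioi]; positivity
    have hmem4 : s + ε ∈ Set.Ioi (0:ℝ) := by simp only [Set.mem_Ioi]; linarith
    have hfs : f (δ + ((k:ℝ) + 1) * (ε / 2)) ≤ f s :=
      hf.antitoneOn hmem1 hmem2 (by linarith)
    have hfse : f (s + ε) ≤ f (δ + ((k:ℝ) + 2) * (ε / 2)) := by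
      apply hf.antitoneOn hmem3 hmem4
      nlinarith
    have hηc := Finset.inf'_le c hkK
    simp only [hc] at hηc
    push_cast at hηc ⊢
    linarith


private lemma isCompact_convexHull_euclid {p : ℕ} {A : Set (EuclideanSpace ℝ (Fin p))}
    (hA : IsCompact A) (hAne : A.Nonempty) : IsCompact (convexHull ℝ A) := by
  classical
  obtain ⟨a₀, ha₀⟩ := hAne
  set g : (Fin (p + 1) → ℝ) × (Fin (p + 1) → EuclideanSpace ℝ (Fin p)) → EuclideanSpace ℝ (Fin p) :=
    fun q => ∑ i, q.1 i • q.2 i with hg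
  have himg : convexHull ℝ A =
      g '' ((stdSimplex ℝ (Fin (p + 1))) ×ˢ (Set.univ.pi fun _ => A)) := by
    apply Subset.antisymm
    · intro x hx
      obtain ⟨ι, hι, z, w, hzA, hind, hwpos, hw1, hwx⟩ :=
        eq_pos_convex_span_of_mem_convexHull hx
      have hcard : Fintype.card ι ≤ p + 1 := by
        have h1 := hind.card_le_finrank_succ
        have h2 : Module.finrank ℝ (vectorSpan ℝ (Set.range z)) ≤ p := by
          have := Submodule.finrank_le (vectorSpan ℝ (Set.range z))
          rwa [finrank_euclideanSpace_fin] at this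
        omega
      set n := Fintype.card ι with hn
      set e : Fin n ≃ ι := (Fintype.equivFin ι).symm with he
      set W : ℕ → ℝ := fun i => if h : i < n then w (e ⟨i, h⟩) else 0 with hW
      set Z : ℕ → EuclideanSpace ℝ (Fin p) := fun i => if h : i < n then z (e ⟨i, h⟩) else a₀ with hZ
      have hWsum : ∀ (F : ℕ → ℝ) (hF0 : ∀ i, ¬ i < n → F i = 0),
          True := fun _ _ => trivial
      refine ⟨⟨fun i => W i, fun i => Z i⟩, ⟨?_, ?_⟩, ?_⟩
      · constructor
        · intro i
          simp only [hW]
          split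
          · exact (hwpos _).le
          · exact le_rfl
        · have : ∑ i : Fin (p + 1), W i = 1 := by
            rw [Fin.sum_univ_eq_sum_range W (p + 1)]
            rw [← Finset.sum_subset (Finset.range_subset_range.2 (by omega : n ≤ p + 1))
              (fun i _ hi => by
                simp only [hW]
                rw [dif_neg (fun h => hi (Finset.mem_range.2 h))])]
            rw [← Fin.sum_univ_eq_sum_range W n]
            rw [show ∑ i : Fin n, W i = ∑ i : Fin n, w (e i) from
              Finset.sum_congr rfl (fun i _ => by simp [hW, i.2])]
            rw [Equiv.sum_comp e w]
            exact hw1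
          exact this
      · intro i _
        simp only [hZ]
        split
        · exact hzA ⟨_, rfl⟩
        · exact ha₀
      · simp only [hg]
        have : ∑ i : Fin (p + 1), W i • Z i = x := by
          rw [Fin.sum_univ_eq_sum_range (fun i => W i • Z i) (p + 1)]
          rw [← Finset.sum_subset (Finset.range_subset_range.2 (by omega : n ≤ p + 1))
            (fun i _ hi => by
              simp only [hW]
              rw [dif_neg (fun h => hi (Finset.mem_range.2 h)), zero_smul])]
          rw [← Fin.sum_univ_eq_sum_range (fun i => W i • Z i) n]
          rw [show ∑ i : Fin n, W i • Z i = ∑ i : Fin n, w (e i) • z (e i) from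
            Finset.sum_congr rfl (fun i _ => by simp [hW, hZ, i.2])]
          rw [Equiv.sum_comp e (fun i => w i • z i)]
          exact hwx
        exact this
    · rintro x ⟨⟨wgt, pts⟩, ⟨hw, hpts⟩, rfl⟩
      apply Convex.sum_mem (convex_convexHull ℝ A)
      · exact fun i _ => hw.1 i
      · exact hw.2
      · exact fun i _ => subset_convexHull ℝ A (hpts i (Set.mem_univ i))
  rw [himg]
  apply IsCompact.image
  · exact (isCompact_stdSimplex _ _).prod (isCompact_univ_pi fun _ => hA)
  · apply continuous_finset_sum
    intro i _
    exact ((continuous_apply i).comp continuous_fst).smul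
      ((continuous_apply i).comp continuous_snd)


/-- The polarization value of the configuration `ω` on the set `A`
for the kernel `K(x,y) = f(|x-y|)`. -/
noncomputable def polVal {p : ℕ} (f : ℝ → ℝ) (A : Set (EuclideanSpace ℝ (Fin p)))
    {N : ℕ} (ω : Fin N → EuclideanSpace ℝ (Fin p)) : EReal :=
  ⨅ y ∈ A, ∑ i, ((f (dist (ω i) y) : ℝ) : EReal)

/-- The unconstrained `N`-point polarization of `A`. -/
noncomputable def polStar {p : ℕ} (f : ℝ → ℝ) (A : Set (EuclideanSpace ℝ (Fin p)))
    (N : ℕ) : EReal :=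
  ⨆ ω : Fin N → EuclideanSpace ℝ (Fin p), polVal f A ω

/-- The constrained `N`-point polarization of `A`. -/
noncomputable def polConstr {p : ℕ} (f : ℝ → ℝ) (A : Set (EuclideanSpace ℝ (Fin p)))
    (N : ℕ) : EReal :=
  ⨆ (ω : Fin N → EuclideanSpace ℝ (Fin p)) (_ : ∀ i, ω i ∈ A), polVal f A ω


theorem stmt1 {p N : ℕ} (f : ℝ → ℝ) (hf : StrictAntiOn f (Set.Ioi 0))
    (A : Set (EuclideanSpace ℝ (Fin p))) (hA : IsCompact A) (hAne : A.Nonempty)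
    (ω : Fin N → EuclideanSpace ℝ (Fin p))
    (hopt : polVal f A ω = polStar f A N) (hfin : polStar f A N < ⊤) :
    (∀ i, ω i ∈ convexHull ℝ A) ∧
    (Convex ℝ A → (∀ i, ω i ∈ A) ∧ polConstr f A N = polStar f A N) := by
  classical
  obtain ⟨R, hR⟩ := hA.isBounded.subset_closedBall 0
  have hyA_norm : ∀ y ∈ A, ‖y‖ ≤ |R| := fun y hy =>
    (mem_closedBall_zero_iff.1 (hR hy)).trans (le_abs_self R)
  have key : ∀ i, ω i ∈ convexHull ℝ A := by
    intro i0
    by_contra hu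
    set u := ω i0 with hu_def
    set C := convexHull ℝ A with hCdef
    have hCc : IsCompact C := isCompact_convexHull_euclid hA hAne
    have hCcl : IsClosed C := hCc.isClosed
    have hCconv : Convex ℝ C := convex_convexHull ℝ A
    have hCne : C.Nonempty := hAne.mono (subset_convexHull ℝ A)
    obtain ⟨v, hvC, hv⟩ :=
      exists_norm_eq_iInf_of_complete_convex hCne hCcl.isComplete hCconv u
    have hproj : ∀ w ∈ C, ⟪u - v, w - v⟫ ≤ 0 :=
      (norm_eq_iInf_iff_real_inner_le_zero hCconv hvC).1 hv
    have hd : 0 < ‖u - v‖ := norm_sub_pos_iff.mpr (fun h => hu (h ▸ hvC))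
    set d := ‖u - v‖ with hd_def
    set z := (2⁻¹ : ℝ) • (u + v) with hz_def
    set D := ‖u‖ + ‖z‖ + |R| + 1 with hD_def
    have hD1 : 1 ≤ D := by
      have := norm_nonneg u; have := norm_nonneg z; have := abs_nonneg R
      simp only [hD_def]; linarith
    have hbu : ∀ y ∈ A, ‖u - y‖ ≤ D := by
      intro y hy
      have h1 := norm_sub_le u y
      have h2 := hyA_norm y hy
      have := norm_nonneg z
      simp only [hD_def]; linarith
    have hbz : ∀ y ∈ A, ‖z - y‖ ≤ D := by
      intro y hy
      have h1 := norm_sub_le z y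
      have h2 := hyA_norm y hy
      have := norm_nonneg u
      simp only [hD_def]; linarith
    set ε := 3 / 4 * d ^ 2 / (2 * D) with hε_def
    have hεpos : 0 < ε := by
      apply div_pos (by positivity) (by linarith)
    obtain ⟨η, hηpos, hgap⟩ :=
      exists_gap f hf (show (0:ℝ) < d / 2 by positivity) hεpos (D := D)
    have hkey : ∀ y ∈ A, f (dist u y) + η ≤ f (dist z y) := by
      intro y hy
      have hyC : y ∈ C := subset_convexHull ℝ A hy
      have hip : 0 ≤ ⟪u - v, v - y⟫ := by
        have h1 := hproj y hyC
        have h2 : ⟪u - v, v - y⟫ = -⟪u - v, y - v⟫ := by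
          rw [← inner_neg_right]
          congr 1
          abel
        linarith
      have huy : ‖u - y‖ ^ 2 = ‖u - v‖ ^ 2 + 2 * ⟪u - v, v - y⟫ + ‖v - y‖ ^ 2 := by
        have h3 : u - y = (u - v) + (v - y) := by abel
        rw [h3, norm_add_sq_real]
      have hzy : ‖z - y‖ ^ 2 = (1/4) * ‖u - v‖ ^ 2 + ⟪u - v, v - y⟫ + ‖v - y‖ ^ 2 := by
        have h3 : z - y = (2⁻¹ : ℝ) • (u - v) + (v - y) := by
          rw [hz_def]; module
        rw [h3, norm_add_sq_real, norm_smul, real_inner_smul_left]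
        have h4 : ‖(2⁻¹ : ℝ)‖ = 2⁻¹ := by
          rw [Real.norm_eq_abs, abs_of_pos]; norm_num
        rw [h4]; ring
      have hb1 : d / 2 ≤ ‖z - y‖ := by
        nlinarith [norm_nonneg (z - y), sq_nonneg ‖v - y‖, hip, hd]
      have hdu : dist u y = ‖u - y‖ := dist_eq_norm u y
      have hdz : dist z y = ‖z - y‖ := dist_eq_norm z y
      have h2D : ε * (2 * D) = 3 / 4 * d ^ 2 := by
        rw [hε_def]; field_simp
      have ha : dist z y + ε ≤ dist u y := by
        rw [hdu, hdz]
        nlinarith [hbu y hy, hbz y hy, norm_nonneg (u - y), norm_nonneg (z - y),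
          hip, hd, hεpos, hb1]
      have h5 := hgap (dist z y) (by rw [hdz]; exact hb1) (by rw [hdz]; exact hbz y hy)
      have h6 : f (dist u y) ≤ f (dist z y + ε) := by
        apply hf.antitoneOn
        · simp only [Set.mem_Ioi]
          have := dist_nonneg (x := z) (y := y); linarith
        · simp only [Set.mem_Ioi]
          have := dist_nonneg (x := z) (y := y); linarith
        · exact ha
      linarith
    set ω' := Function.update ω i0 z with hω'
    have hsum : ∀ y ∈ A, (∑ j, f (dist (ω j) y)) + η ≤ ∑ j, f (dist (ω' j) y) := by
      intro y hy
      have h0 : (∑ j, f (dist (ω j) y)) + η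
          = ∑ j, (f (dist (ω j) y) + if j = i0 then η else 0) := by
        rw [Finset.sum_add_distrib, Finset.sum_ite_eq' Finset.univ i0 (fun _ => η)]
        simp
      rw [h0]
      apply Finset.sum_le_sum
      intro j _
      by_cases hj : j = i0
      · subst hj
        simp only [hω', Function.update_self, if_pos rfl]
        exact hkey y hy
      · simp only [hω', Function.update_of_ne hj, if_neg hj, add_zero, le_refl]
    have hmono : polVal f A ω + (η : EReal) ≤ polVal f A ω' := by
      simp only [polVal]
      refine le_iInf₂ fun y hy => ?_
      have h1 : (⨅ y ∈ A, ∑ i, ((f (dist (ω i) y) : ℝ) : EReal))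
          ≤ ((∑ j, f (dist (ω j) y) : ℝ) : EReal) := by
        rw [ereal_coe_sum]
        exact iInf₂_le y hy
      calc (⨅ y ∈ A, ∑ i, ((f (dist (ω i) y) : ℝ) : EReal)) + (η : EReal)
          ≤ ((∑ j, f (dist (ω j) y) : ℝ) : EReal) + (η : EReal) := by gcongr
        _ = (((∑ j, f (dist (ω j) y)) + η : ℝ) : EReal) := (EReal.coe_add _ _).symm
        _ ≤ ((∑ j, f (dist (ω' j) y) : ℝ) : EReal) := EReal.coe_le_coe_iff.2 (hsum y hy)
        _ = ∑ j, ((f (dist (ω' j) y) : ℝ) : EReal) := ereal_coe_sum _ _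
    have hub : polVal f A ω' ≤ polStar f A N := by
      simp only [polStar]
      exact le_iSup (fun ω'' => polVal f A ω'') ω'
    have hbot : polStar f A N ≠ ⊥ := by
      set D₂ := (∑ j, ‖ω j‖) + |R| + 1 with hD₂
      have hD₂pos : 0 < D₂ := by
        have h1 : (0:ℝ) ≤ ∑ j, ‖ω j‖ := Finset.sum_nonneg fun j _ => norm_nonneg _
        have := abs_nonneg R
        simp only [hD₂]; linarith
      set m := min (f 0) (f D₂) with hm
      have hlow : ((N * m : ℝ) : EReal) ≤ polVal f A ω := by
        simp only [polVal]
        refine le_iInf₂ fun y hy => ?_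
        rw [← ereal_coe_sum]
        apply EReal.coe_le_coe_iff.2
        have h2 : (N : ℝ) * m = ∑ _j : Fin N, m := by
          rw [Finset.sum_const, Finset.card_univ, Fintype.card_fin, nsmul_eq_mul]
        rw [h2]
        apply Finset.sum_le_sum
        intro j _
        have hd0 : dist (ω j) y ≤ D₂ := by
          have h3 := dist_le_norm_add_norm (ω j) y
          have h4 : ‖ω j‖ ≤ ∑ k, ‖ω k‖ :=
            Finset.single_le_sum (fun k _ => norm_nonneg (ω k)) (Finset.mem_univ j)
          have h5 := hyA_norm y hy
          simp only [hD₂]; linarith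
        rcases eq_or_lt_of_le (dist_nonneg : (0:ℝ) ≤ dist (ω j) y) with h | h
        · rw [← h]; exact min_le_left _ _
        · exact le_trans (min_le_right _ _)
            (hf.antitoneOn (Set.mem_Ioi.2 h) (Set.mem_Ioi.2 hD₂pos) hd0)
      intro hb
      rw [hopt, hb] at hlow
      exact (EReal.coe_ne_bot _) (le_bot_iff.1 hlow)
    have htop : polStar f A N ≠ ⊤ := hfin.ne
    have hcoe := EReal.coe_toReal htop hbot
    rw [hopt] at hmono
    have hfinal : polStar f A N + (η : EReal) ≤ polStar f A N := hmono.trans hub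
    rw [← hcoe, ← EReal.coe_add, EReal.coe_le_coe_iff] at hfinal
    linarith
  refine ⟨key, fun hconv => ?_⟩
  have hsub : ∀ i, ω i ∈ A := fun i => by
    rw [← hconv.convexHull_eq]; exact key i
  refine ⟨hsub, le_antisymm ?_ ?_⟩
  · simp only [polConstr, polStar]
    exact iSup₂_le fun ω'' _ => le_iSup (fun ω3 => polVal f A ω3) ω''
  · rw [← hopt]
    simp only [polConstr]
    exact le_iSup₂ (f := fun ω'' (_ : ∀ i, ω'' i ∈ A) => polVal f A ω'') ω hsub
end

section
/- Let f : (0,∞) → ℝ be strictly decreasing and K(x,y) := f(|x−y|). For p ≥ 2 and 1 ≤ N ≤ p, any N-point multiset ω*_N = {x₁,…,x_N} ⊆ ℝ^p attaining the unconstrained maximal K-polarization of the unit sphere S^{p−1} (i.e., min_{y∈S^{p−1}} Σᵢ K(xᵢ, y) = 𝒫*_K(S^{p−1}, N)) must have all points at the origin: xᵢ = 0 for all i. -/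
open Set Metric

/-- Polarization value of `ω` on the unit sphere for kernel `K(x,y) = f(|x-y|)`. -/
noncomputable def spherePolVal {p N : ℕ} (f : ℝ → ℝ)
    (ω : Fin N → EuclideanSpace ℝ (Fin p)) : EReal :=
  ⨅ y : Metric.sphere (0 : EuclideanSpace ℝ (Fin p)) 1,
    ∑ i, ((f (dist (ω i) (y : EuclideanSpace ℝ (Fin p))) : ℝ) : EReal)

private def realToERealHom : ℝ →+ EReal where
  toFun := Real.toEReal
  map_zero' := rfl
  map_add' := EReal.coe_add

private lemma coe_sum_eq {ι : Type*} (s : Finset ι) (g : ι → ℝ) :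
    ((∑ i ∈ s, g i : ℝ) : EReal) = ∑ i ∈ s, ((g i : ℝ) : EReal) :=
  map_sum realToERealHom g s

/-- If `N ≤ p`, there is a nonzero vector making nonpositive inner product with
all `ω i`. -/
private lemma exists_neg_inner {p N : ℕ} (hN1 : 1 ≤ N) (hNp : N ≤ p)
    (ω : Fin N → EuclideanSpace ℝ (Fin p)) :
    ∃ v : EuclideanSpace ℝ (Fin p), v ≠ 0 ∧
      ∀ i, (inner ℝ (ω i) v : ℝ) ≤ 0 := by
  set T : EuclideanSpace ℝ (Fin p) →ₗ[ℝ] (Fin N → ℝ) :=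
    LinearMap.pi (fun i => (innerSL ℝ (ω i)).toLinearMap) with hT
  by_cases h : Function.Injective T
  · -- then p ≤ N, so p = N and T is surjective
    have hle : p ≤ N := by
      have := LinearMap.finrank_le_finrank_of_injective h
      simpa [finrank_euclideanSpace_fin, Module.finrank_fin_fun] using this
    have hdim : Module.finrank ℝ (EuclideanSpace ℝ (Fin p)) =
        Module.finrank ℝ (Fin N → ℝ) := by
      simp [finrank_euclideanSpace_fin, Module.finrank_fin_fun]
      omega
    have hsurj : Function.Surjective T :=
      (LinearMap.injective_iff_surjective_of_finrank_eq_finrank hdim).mp h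
    obtain ⟨v, hv⟩ := hsurj (fun _ => -1)
    refine ⟨v, ?_, ?_⟩
    · intro h0
      have : T v ⟨0, hN1⟩ = 0 := by rw [h0]; simp
      rw [hv] at this
      norm_num at this
    · intro i
      have : T v i = -1 := by rw [hv]
      have h2 : (inner ℝ (ω i) v : ℝ) = -1 := this
      rw [h2]; norm_num
  · -- kernel is nonzero
    rw [← LinearMap.ker_eq_bot] at h
    obtain ⟨v, hvmem, hv0⟩ := Submodule.exists_mem_ne_zero_of_ne_bot h
    refine ⟨v, hv0, fun i => ?_⟩
    have : T v = 0 := hvmem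
    have h2 : (inner ℝ (ω i) v : ℝ) = (T v) i := rfl
    rw [h2, this]
    simp

theorem stmt10 {p N : ℕ} (hp : 2 ≤ p) (hN1 : 1 ≤ N) (hNp : N ≤ p)
    (f : ℝ → ℝ) (hf : StrictAntiOn f (Set.Ioi 0))
    (ω : Fin N → EuclideanSpace ℝ (Fin p))
    (hopt : spherePolVal f ω =
      ⨆ ω' : Fin N → EuclideanSpace ℝ (Fin p), spherePolVal f ω') :
    ∀ i, ω i = 0 := by
  intro i₀
  by_contra hne
  obtain ⟨v, hv0, hvle⟩ := exists_neg_inner hN1 hNp ω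
  set y₀ : EuclideanSpace ℝ (Fin p) := ‖v‖⁻¹ • v with hy₀def
  have hvnorm : ‖v‖ ≠ 0 := norm_ne_zero_iff.mpr hv0
  have hy₀norm : ‖y₀‖ = 1 := by
    rw [hy₀def, norm_smul, norm_inv, norm_norm, inv_mul_cancel₀ hvnorm]
  have hy₀mem : y₀ ∈ Metric.sphere (0 : EuclideanSpace ℝ (Fin p)) 1 := by
    simpa [mem_sphere_iff_norm] using hy₀norm
  have hinner : ∀ i, (inner ℝ (ω i) y₀ : ℝ) ≤ 0 := by
    intro i
    rw [hy₀def, real_inner_smul_right]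
    have : (0:ℝ) ≤ ‖v‖⁻¹ := inv_nonneg.mpr (norm_nonneg v)
    exact mul_nonpos_of_nonneg_of_nonpos this (hvle i)
  have hdistsq : ∀ i, dist (ω i) y₀ ^ 2 =
      ‖ω i‖ ^ 2 - 2 * (inner ℝ (ω i) y₀ : ℝ) + 1 := by
    intro i
    rw [dist_eq_norm, norm_sub_sq_real, hy₀norm]
    ring
  have hdist1 : ∀ i, 1 ≤ dist (ω i) y₀ := by
    intro i
    have h1 : 1 ≤ dist (ω i) y₀ ^ 2 := by
      rw [hdistsq i]
      nlinarith [sq_nonneg ‖ω i‖, hinner i]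
    nlinarith [dist_nonneg (x := ω i) (y := y₀)]
  have hdistlt : 1 < dist (ω i₀) y₀ := by
    have hn : 0 < ‖ω i₀‖ := norm_pos_iff.mpr hne
    have h1 : 1 < dist (ω i₀) y₀ ^ 2 := by
      rw [hdistsq i₀]
      nlinarith [hinner i₀]
    nlinarith [dist_nonneg (x := ω i₀) (y := y₀)]
  -- compare f values
  have hfle : ∀ i, f (dist (ω i) y₀) ≤ f 1 := by
    intro i
    rcases eq_or_lt_of_le (hdist1 i) with h | h
    · rw [← h]
    · exact le_of_lt (hf (by norm_num : (1:ℝ) ∈ Set.Ioi 0)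
        (Set.mem_Ioi.mpr (by linarith)) h)
  have hflt : f (dist (ω i₀) y₀) < f 1 :=
    hf (by norm_num : (1:ℝ) ∈ Set.Ioi 0)
      (Set.mem_Ioi.mpr (by linarith)) hdistlt
  have hsumlt : ∑ i, f (dist (ω i) y₀) < ∑ _i : Fin N, f 1 := by
    apply Finset.sum_lt_sum (fun i _ => hfle i) ⟨i₀, Finset.mem_univ i₀, hflt⟩
  -- EReal chain
  have h1 : spherePolVal f ω ≤ ((∑ i, f (dist (ω i) y₀) : ℝ) : EReal) := by
    rw [coe_sum_eq]
    exact iInf_le _ (⟨y₀, hy₀mem⟩ : Metric.sphere (0 : EuclideanSpace ℝ (Fin p)) 1)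
  have h2 : ((∑ i, f (dist (ω i) y₀) : ℝ) : EReal) <
      ((∑ _i : Fin N, f 1 : ℝ) : EReal) :=
    EReal.coe_lt_coe_iff.mpr hsumlt
  have h3 : ((∑ _i : Fin N, f 1 : ℝ) : EReal) ≤
      spherePolVal f (fun _ : Fin N => (0 : EuclideanSpace ℝ (Fin p))) := by
    apply le_iInf
    intro y
    have hdy : dist (0 : EuclideanSpace ℝ (Fin p)) (y : EuclideanSpace ℝ (Fin p)) = 1 := by
      rw [dist_comm]
      exact y.2
    rw [coe_sum_eq]
    simp [hdy]
  have h4 : spherePolVal f (fun _ : Fin N => (0 : EuclideanSpace ℝ (Fin p))) ≤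
      ⨆ ω' : Fin N → EuclideanSpace ℝ (Fin p), spherePolVal f ω' :=
    le_iSup _ _
  have : spherePolVal f ω < spherePolVal f ω := by
    calc spherePolVal f ω ≤ _ := h1
      _ < _ := h2
      _ ≤ _ := h3
      _ ≤ _ := h4
      _ = spherePolVal f ω := hopt.symm
  exact lt_irrefl _ this
end

section
/- Fix p ≥ 2 and let C_p be the maximal cardinality of a set of points on S^{p−1} that are pairwise separated by geodesic distance at least π/6. Let A ⊆ ℝ^p be compact and x ∉ A with A nonempty. Then there exist points x₁, …, x_n ∈ A with n ≤ C_p such that for every decreasing function f : (0,∞) → ℝ and every y ∈ A: f(|x − y|) ≤ max_{1 ≤ j ≤ n} f(|x_j − y|). Equivalently, for every y ∈ A there exists j with |x_j − y| ≤ |x − y|. -/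
open Set Metric
open scoped RealInnerProductSpace

/-- Maximal cardinality of a set of points of `S^{p-1}` that are pairwise separated
by geodesic distance (i.e. angle) at least `π/6`. -/
noncomputable def maxSepPacking (p : ℕ) : ℕ :=
  sSup {n : ℕ | ∃ v : Fin n → EuclideanSpace ℝ (Fin p),
    (∀ i, ‖v i‖ = 1) ∧ ∀ i j, i ≠ j → Real.pi / 6 ≤ Real.arccos ⟪v i, v j⟫}

/-!
Call a finite set `S ⊆ A` greedy if it arises by repeatedly adding a point of `A` nearest to `x`
among those that are at least as close to `x` as to every point chosen so far. Any two points
`s ≠ t` of a greedy set satisfy `|x - s|, |x - t| ≤ |s - t|`, so the angle at `x` of the triangle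
`x s t` is at least `π/3`, and the directions of the points as seen from `x` form a
`π/6`-separated family on the sphere: a greedy set has at most `C_p` points. Hence the greedy
process stops, and it can only stop once every `y ∈ A` is strictly closer to some chosen point
than to `x`.
-/

open InnerProductGeometry Real

lemma IsCompact.bddAbove_card_of_le_dist {X : Type*} [PseudoMetricSpace X] {K : Set X}
    (hK : IsCompact K) {δ : ℝ} (hδ : 0 < δ) :
    BddAbove {n : ℕ | ∃ v : Fin n → X, (∀ i, v i ∈ K) ∧
      Pairwise fun i j => δ ≤ dist (v i) (v j)} := by
  obtain ⟨t, -, htf, hcover⟩ := hK.finite_cover_balls (half_pos hδ)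
  refine ⟨htf.toFinset.card, ?_⟩
  rintro n ⟨v, hvK, hsep⟩
  have hcenter : ∀ i, ∃ c ∈ t, v i ∈ ball c (δ / 2) := fun i => by
    simpa using hcover (hvK i)
  choose c hct hc using hcenter
  have hinj : Function.Injective c := by
    intro i j hij
    by_contra hne
    have hi := mem_ball.1 (hc i)
    have hj := mem_ball.1 (hc j)
    rw [← hij] at hj
    linarith [hsep hne, dist_triangle_right (v i) (v j) (c i)]
  simpa using Finset.card_le_card_of_injOn (s := Finset.univ) c
    (fun i _ => htf.mem_toFinset.2 (hct i)) hinj.injOn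

lemma maxSepPacking_bddAbove (p : ℕ) :
    BddAbove {n : ℕ | ∃ v : Fin n → EuclideanSpace ℝ (Fin p),
      (∀ i, ‖v i‖ = 1) ∧ ∀ i j, i ≠ j → Real.pi / 6 ≤ Real.arccos ⟪v i, v j⟫} := by
  refine ((isCompact_sphere (0 : EuclideanSpace ℝ (Fin p)) 1).bddAbove_card_of_le_dist
    (δ := 1 / 2) (by norm_num)).mono ?_
  rintro n ⟨v, hv1, hsep⟩
  refine ⟨v, fun i => by simpa using hv1 i, fun i j hij => ?_⟩
  have habs : |⟪v i, v j⟫| ≤ 1 := by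
    simpa [hv1 i, hv1 j] using abs_real_inner_le_norm (v i) (v j)
  have hinner : ⟪v i, v j⟫ ≤ √3 / 2 := by
    have := Real.cos_le_cos_of_nonneg_of_le_pi (by positivity) (Real.arccos_le_pi _) (hsep i j hij)
    rwa [Real.cos_arccos (neg_le_of_abs_le habs) (le_of_abs_le habs), Real.cos_pi_div_six] at this
  have hdist : dist (v i) (v j) ^ 2 = 2 - 2 * ⟪v i, v j⟫ := by
    rw [dist_eq_norm, norm_sub_sq_real, hv1 i, hv1 j]
    ring
  have hsqrt3 : √3 ≤ 7 / 4 := Real.sqrt_le_iff.2 ⟨by norm_num, by norm_num⟩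
  nlinarith [dist_nonneg (x := v i) (y := v j)]

section Angle

variable {V : Type*} [NormedAddCommGroup V] [InnerProductSpace ℝ V]

lemma arccos_inner_normalize_eq_angle {u w : V} (hu : u ≠ 0) (hw : w ≠ 0) :
    Real.arccos ⟪‖u‖⁻¹ • u, ‖w‖⁻¹ • w⟫ = angle u w := by
  rw [← angle_smul_left_of_pos u w (inv_pos.2 (norm_pos_iff.2 hu)),
    ← angle_smul_right_of_pos _ w (inv_pos.2 (norm_pos_iff.2 hw)), angle,
    show ‖‖u‖⁻¹ • u‖ = 1 from norm_smul_inv_norm hu,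
    show ‖‖w‖⁻¹ • w‖ = 1 from norm_smul_inv_norm hw, mul_one, div_one]

lemma pi_div_three_le_angle_of_norm_le_norm_sub {u w : V} (hu : ‖u‖ ≤ ‖u - w‖)
    (hw : ‖w‖ ≤ ‖u - w‖) : π / 3 ≤ angle u w := by
  rcases eq_or_ne u 0 with rfl | hu0
  · rw [angle_zero_left]; linarith [Real.pi_pos]
  rcases eq_or_ne w 0 with rfl | hw0
  · rw [angle_zero_right]; linarith [Real.pi_pos]
  by_contra! hlt
  have hcos : 1 / 2 < Real.cos (angle u w) := by
    rw [← Real.cos_pi_div_three]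
    exact Real.cos_lt_cos_of_nonneg_of_le_pi (angle_nonneg u w) (by linarith [Real.pi_pos]) hlt
  have hlaw := norm_sub_sq_eq_norm_sq_add_norm_sq_sub_two_mul_norm_mul_norm_mul_cos_angle u w
  have hprod : 0 < ‖u‖ * ‖w‖ := mul_pos (norm_pos_iff.2 hu0) (norm_pos_iff.2 hw0)
  nlinarith [norm_nonneg u, norm_nonneg w]

end Angle

lemma card_le_maxSepPacking {ι : Type*} [Fintype ι] {p : ℕ} (v : ι → EuclideanSpace ℝ (Fin p))
    (hv : ∀ i, v i ≠ 0) (hangle : Pairwise fun i j => π / 6 ≤ angle (v i) (v j)) :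
    Fintype.card ι ≤ maxSepPacking p := by
  let e := (Fintype.equivFin ι).symm
  refine le_csSup (maxSepPacking_bddAbove p)
    ⟨fun k => ‖v (e k)‖⁻¹ • v (e k), fun k => norm_smul_inv_norm (hv _), fun k l hkl => ?_⟩
  rw [arccos_inner_normalize_eq_angle (hv _) (hv _)]
  exact hangle (e.injective.ne hkl)

lemma card_le_maxSepPacking_of_dist_le {p : ℕ} {x : EuclideanSpace ℝ (Fin p)}
    {S : Finset (EuclideanSpace ℝ (Fin p))} (hxS : x ∉ S)
    (hS : ∀ s ∈ S, ∀ t ∈ S, s ≠ t → dist x t ≤ dist s t) :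
    S.card ≤ maxSepPacking p := by
  rw [← Fintype.card_coe S]
  refine card_le_maxSepPacking (fun s : S => (s : EuclideanSpace ℝ (Fin p)) - x)
    (fun s => sub_ne_zero.2 fun h => hxS (h ▸ s.2)) fun s t hst => ?_
  have hst' : (s : EuclideanSpace ℝ (Fin p)) ≠ t := Subtype.coe_injective.ne hst
  refine le_trans (by linarith [Real.pi_pos]) (pi_div_three_le_angle_of_norm_le_norm_sub ?_ ?_)
  · rw [sub_sub_sub_cancel_right, ← dist_eq_norm, ← dist_eq_norm, dist_comm, dist_comm s.1]
    exact hS t t.2 s s.2 hst'.symm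
  · rw [sub_sub_sub_cancel_right, ← dist_eq_norm, ← dist_eq_norm, dist_comm]
    exact hS s s.2 t t.2 hst'

section Greedy

variable {X : Type*} [MetricSpace X] {x z : X} {A : Set X} {S : Finset X}

def voronoiCell (x : X) (S : Finset X) : Set X :=
  {z | ∀ t ∈ S, dist x z ≤ dist t z}

lemma isClosed_voronoiCell (x : X) (S : Finset X) : IsClosed (voronoiCell x S) := by
  simp only [voronoiCell, Set.ofPred_forall]
  exact isClosed_biInter fun t _ =>
    isClosed_le (continuous_const.dist continuous_id) (continuous_const.dist continuous_id)

lemma voronoiCell_insert_subset [DecidableEq X] : voronoiCell x (insert z S) ⊆ voronoiCell x S :=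
  fun _ hw t ht => hw t (Finset.mem_insert_of_mem ht)

lemma notMem_of_mem_voronoiCell (hxz : x ≠ z) (hz : z ∈ voronoiCell x S) : z ∉ S := fun hzS =>
  hxz (dist_le_zero.1 ((hz z hzS).trans_eq (dist_self z)))

structure IsGreedyFamily (x : X) (A : Set X) (S : Finset X) : Prop where
  subset : ↑S ⊆ A
  dist_center_le : ∀ s ∈ S, ∀ t ∈ S, s ≠ t → dist x t ≤ dist s t
  dist_center_le_of_mem : ∀ s ∈ S, ∀ z ∈ A ∩ voronoiCell x S, dist x s ≤ dist x z

lemma isGreedyFamily_empty (x : X) (A : Set X) : IsGreedyFamily x A ∅ :=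
  ⟨by simp, by simp, by simp⟩

lemma IsGreedyFamily.insert_of_isMinOn [DecidableEq X] (hS : IsGreedyFamily x A S)
    (hz : z ∈ A ∩ voronoiCell x S) (hmin : IsMinOn (dist x) (A ∩ voronoiCell x S) z) :
    IsGreedyFamily x A (insert z S) where
  subset := by
    rw [Finset.coe_insert]
    exact Set.insert_subset hz.1 hS.subset
  dist_center_le s hs t ht hst := by
    rcases Finset.mem_insert.1 hs with rfl | hsS <;> rcases Finset.mem_insert.1 ht with rfl | htS
    · exact absurd rfl hst
    · calc dist x t ≤ dist x s := hS.dist_center_le_of_mem t htS s hz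
        _ ≤ dist t s := hz.2 t htS
        _ = dist s t := dist_comm t s
    · exact hz.2 s hsS
    · exact hS.dist_center_le s hsS t htS hst
  dist_center_le_of_mem s hs w hw := by
    have hw' : w ∈ A ∩ voronoiCell x S := ⟨hw.1, voronoiCell_insert_subset hw.2⟩
    rcases Finset.mem_insert.1 hs with rfl | hsS
    · exact hmin hw'
    · exact hS.dist_center_le_of_mem s hsS w hw'

lemma IsGreedyFamily.exists_insert [DecidableEq X] (hA : IsCompact A) (hx : x ∉ A)
    (hS : IsGreedyFamily x A S) (hne : (A ∩ voronoiCell x S).Nonempty) :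
    ∃ z ∉ S, IsGreedyFamily x A (insert z S) := by
  obtain ⟨z, hz, hmin⟩ := (hA.inter_right (isClosed_voronoiCell x S)).exists_isMinOn hne
    (continuous_const.dist continuous_id).continuousOn
  exact ⟨z, notMem_of_mem_voronoiCell (ne_of_mem_of_not_mem hz.1 hx).symm hz.2,
    hS.insert_of_isMinOn hz hmin⟩

lemma exists_isGreedyFamily_inter_voronoiCell_eq_empty [DecidableEq X] (hA : IsCompact A)
    (hx : x ∉ A) {N : ℕ} (hcard : ∀ S, IsGreedyFamily x A S → S.card ≤ N) :
    ∃ S, IsGreedyFamily x A S ∧ A ∩ voronoiCell x S = ∅ := by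
  by_contra! hstuck
  have hgrow : ∀ n, ∃ S, IsGreedyFamily x A S ∧ S.card = n := by
    intro n
    induction n with
    | zero => exact ⟨∅, isGreedyFamily_empty x A, rfl⟩
    | succ n ih =>
      obtain ⟨S, hS, rfl⟩ := ih
      obtain ⟨z, hzS, hzS'⟩ := hS.exists_insert hA hx (hstuck S hS)
      exact ⟨insert z S, hzS', Finset.card_insert_of_notMem hzS⟩
  obtain ⟨S, hS, hSN⟩ := hgrow (N + 1)
  have := hcard S hS
  omega

end Greedy

theorem stmt15_general (p : ℕ) (A : Set (EuclideanSpace ℝ (Fin p)))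
    (hA : IsCompact A)
    (x : EuclideanSpace ℝ (Fin p)) (hx : x ∉ A) :
    ∃ (n : ℕ) (x' : Fin n → EuclideanSpace ℝ (Fin p)),
      n ≤ maxSepPacking p ∧ (∀ j, x' j ∈ A) ∧
      (∀ f : ℝ → ℝ, AntitoneOn f (Set.Ici 0) →
        ∀ y ∈ A, ∃ j, f (dist x y) ≤ f (dist (x' j) y)) ∧
      (∀ y ∈ A, ∃ j, dist (x' j) y ≤ dist x y) := by
  classical
  have hcard : ∀ S, IsGreedyFamily x A S → S.card ≤ maxSepPacking p := fun S hS =>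
    card_le_maxSepPacking_of_dist_le (fun hxS => hx (hS.subset hxS)) hS.dist_center_le
  obtain ⟨S, hS, hcover⟩ := exists_isGreedyFamily_inter_voronoiCell_eq_empty hA hx hcard
  have hnear : ∀ y ∈ A, ∃ j, dist (S.equivFin.symm j : EuclideanSpace ℝ (Fin p)) y ≤ dist x y := by
    intro y hy
    have hyS : y ∉ voronoiCell x S := fun hyS => hcover.subset ⟨hy, hyS⟩
    simp only [voronoiCell, Set.mem_ofPred_eq, not_forall, not_le] at hyS
    obtain ⟨s, hs, hsy⟩ := hyS
    exact ⟨S.equivFin ⟨s, hs⟩, by simpa using hsy.le⟩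
  refine ⟨S.card, fun j => S.equivFin.symm j, hcard S hS, fun j => hS.subset (S.equivFin.symm j).2,
    fun f hf y hy => ?_, hnear⟩
  obtain ⟨j, hj⟩ := hnear y hy
  exact ⟨j, hf dist_nonneg dist_nonneg hj⟩

theorem stmt15 (p : ℕ) (hp : 2 ≤ p) (A : Set (EuclideanSpace ℝ (Fin p)))
    (hA : IsCompact A) (hAne : A.Nonempty)
    (x : EuclideanSpace ℝ (Fin p)) (hx : x ∉ A) :
    ∃ (n : ℕ) (x' : Fin n → EuclideanSpace ℝ (Fin p)),
      n ≤ maxSepPacking p ∧ (∀ j, x' j ∈ A) ∧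
      (∀ f : ℝ → ℝ, AntitoneOn f (Set.Ici 0) →
        ∀ y ∈ A, ∃ j, f (dist x y) ≤ f (dist (x' j) y)) ∧
      (∀ y ∈ A, ∃ j, dist (x' j) y ≤ dist x y) :=
  stmt15_general p A hA x hx
end
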